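/- arXiv:1105.3426 — 2 statements merged into one kernel-verified Lean document; each statement's English description precedes it below -/
import Mathlib

section
/- For all T ≥ 1 and α > 0 and c > 0, with T_n = 1 + c n^{-α}, one has n log E(T_n) ~ cπ n^{1-α} as n → ∞; in particular E(T_n)^{-n} = exp(-cπ n^{1-α}(1 + o(1))). -/
/-!
`log ∘ E` vanishes at `T = 1` and has derivative `π` there, so `log E(1 + ε) ~ π ε` as `ε → 0`.
With `ε = c n^(-α) → 0` this gives `n log E(T_n) ~ c π n^(1-α)`, and writing the equivalence as
`n log E(T_n) = c π n^(1-α) (1 + g n)` with `g → 0` gives the formula for `E(T_n)^(-n)`.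
-/

open Real Filter Asymptotics

noncomputable def E (T : ℝ) : ℝ := (Real.cos (π / (4 * T)) / Real.sin (π / (4 * T))) ^ 2

open Topology

lemma HasDerivAt.isEquivalent_comp_sub {α : Type*} {l : Filter α} {f : ℝ → ℝ} {f' x : ℝ}
    (hf : HasDerivAt f f' x) (hf' : f' ≠ 0) {u : α → ℝ} (hu : Tendsto u l (𝓝 x)) :
    (fun a => f (u a) - f x) ~[l] fun a => (u a - x) * f' :=
  (HasDerivAtFilter.isEquivalent_sub hf hf').comp_tendsto (hu.prodMk tendsto_const_pure)

lemma E_one : E 1 = 1 := by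
  simp [E, cos_pi_div_four, sin_pi_div_four]

lemma E_pos {T : ℝ} (hT : 1 / 2 < T) : 0 < E T := by
  have hx : π / (4 * T) ∈ Set.Ioo 0 (π / 2) := by
    constructor
    · positivity
    · rw [div_lt_div_iff₀ (by positivity) two_pos]; nlinarith [pi_pos]
  have hsin := sin_pos_of_pos_of_lt_pi hx.1 (by linarith [hx.2, pi_pos])
  have hcos := cos_pos_of_mem_Ioo ⟨by linarith [hx.1, pi_pos], hx.2⟩
  exact pow_pos (div_pos hcos hsin) 2

lemma hasDerivAt_E_one : HasDerivAt E π 1 := by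
  have hx : HasDerivAt (fun T : ℝ => π / (4 * T)) (-(π / 4)) 1 :=
    ((hasDerivAt_const 1 π).div ((hasDerivAt_id 1).const_mul 4) (by norm_num)).congr_deriv
      (by norm_num; ring)
  have hsin : sin (π / (4 * 1)) ≠ 0 := by simp [sin_pi_div_four]
  refine ((hx.cos.div hx.sin hsin).pow 2).congr_deriv ?_
  simp only [Pi.div_apply, mul_one, cos_pi_div_four, sin_pi_div_four]
  field_simp
  norm_num

lemma hasDerivAt_log_E_one : HasDerivAt (fun T => log (E T)) π 1 := by
  simpa [E_one] using hasDerivAt_E_one.log (by simp [E_one])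

lemma Asymptotics.IsEquivalent.exists_rpow_neg_eq_exp {α : Type*} {l : Filter α} {a t v : α → ℝ}
    (ha : ∀ᶠ x in l, 0 < a x) (h : (fun x => t x * Real.log (a x)) ~[l] v) :
    ∃ g : α → ℝ, Tendsto g l (𝓝 0) ∧ ∀ᶠ x in l, a x ^ (-t x) = exp (-v x * (1 + g x)) := by
  obtain ⟨φ, hφ, hφv⟩ := isEquivalent_iff_exists_eq_mul.mp h
  refine ⟨fun x => φ x - 1, by simpa using hφ.sub_const 1, ?_⟩
  filter_upwards [ha, hφv] with x hax hx
  rw [rpow_def_of_pos hax, Pi.mul_apply] at *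
  rw [add_sub_cancel]
  congr 1
  linear_combination -hx

theorem varying_T_decay_general (c α : ℝ) (hc : 0 < c) (hα : 0 < α) :
    (fun n : ℕ => (n : ℝ) * Real.log (E (1 + c * (n : ℝ) ^ (-α)))) ~[atTop]
      (fun n : ℕ => c * π * (n : ℝ) ^ (1 - α)) ∧
    ∃ g : ℕ → ℝ, Tendsto g atTop (nhds 0) ∧
      ∀ᶠ n : ℕ in atTop,
        (E (1 + c * (n : ℝ) ^ (-α))) ^ (-(n : ℝ)) =
          Real.exp (-(c * π * (n : ℝ) ^ (1 - α)) * (1 + g n)) := by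
  have hT : Tendsto (fun n : ℕ => 1 + c * (n : ℝ) ^ (-α)) atTop (𝓝 1) := by
    simpa using ((tendsto_rpow_neg_atTop hα).comp tendsto_natCast_atTop_atTop).const_mul c
      |>.const_add 1
  have hlog : (fun n : ℕ => log (E (1 + c * (n : ℝ) ^ (-α)))) ~[atTop]
      fun n => c * (n : ℝ) ^ (-α) * π := by
    simpa [E_one] using hasDerivAt_log_E_one.isEquivalent_comp_sub pi_ne_zero hT
  have hequiv : (fun n : ℕ => (n : ℝ) * log (E (1 + c * (n : ℝ) ^ (-α)))) ~[atTop]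
      fun n => c * π * (n : ℝ) ^ (1 - α) := by
    refine (IsEquivalent.refl.mul hlog).congr_right ?_
    filter_upwards [eventually_gt_atTop 0] with n hn
    have hn : (0 : ℝ) < n := by exact_mod_cast hn
    simp only [Pi.mul_apply]
    rw [sub_eq_add_neg, rpow_add hn, rpow_one]
    ring
  refine ⟨hequiv, hequiv.exists_rpow_neg_eq_exp (Eventually.of_forall fun n => E_pos ?_)⟩
  have : 0 ≤ c * (n : ℝ) ^ (-α) := by positivity
  linarith

theorem varying_T_decay (c α : ℝ) (hc : 0 < c) (hα : 0 < α) (hα1 : α < 1) :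
    (fun n : ℕ => (n : ℝ) * Real.log (E (1 + c * (n : ℝ) ^ (-α)))) ~[atTop]
      (fun n : ℕ => c * π * (n : ℝ) ^ (1 - α)) ∧
    ∃ g : ℕ → ℝ, Tendsto g atTop (nhds 0) ∧
      ∀ᶠ n : ℕ in atTop,
        (E (1 + c * (n : ℝ) ^ (-α))) ^ (-(n : ℝ)) =
          Real.exp (-(c * π * (n : ℝ) ^ (1 - α)) * (1 + g n)) :=
  varying_T_decay_general c α hc hα
end

section
/- For ε ∈ (0,1), if T_n = (π/4)/arctan(ε^{1/(2n)}), then T_n = 1 - log(ε)/(π n) + O(n^{-2}) as n → ∞. -/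
open Real Filter Asymptotics Topology

/-!
Writing `u = log ε / (2n)`, we have `ε ^ (1 / (2n)) = exp u`, and the claim is the first-order
Taylor expansion at `0` of the smooth function `u ↦ (π / 4) / arctan (exp u)`, whose value there
is `1` and whose derivative there is `-2 / π`; the remainder is `O(u ^ 2) = O(n⁻²)`.
-/

theorem ContDiff.isBigO_sub_taylor_one {E : Type*} [NormedAddCommGroup E] [NormedSpace ℝ E]
    {f : ℝ → E} (hf : ContDiff ℝ 2 f) (x₀ : ℝ) :
    (fun x => f x - (f x₀ + (x - x₀) • deriv f x₀)) =O[𝓝 x₀] fun x => (x - x₀) ^ 2 := by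
  have heval (x : ℝ) : taylorWithinEval f 2 Set.univ x₀ x =
      f x₀ + (x - x₀) • deriv f x₀ + ((x - x₀) ^ 2 / 2) • iteratedDeriv 2 f x₀ := by
    simp only [taylor_within_apply, Finset.sum_range_succ, Finset.sum_range_zero,
      iteratedDerivWithin_univ, iteratedDeriv_zero, iteratedDeriv_one]
    norm_num [div_eq_inv_mul, mul_comm]
  have hquad : (fun x => ((x - x₀) ^ 2 / 2) • iteratedDeriv 2 f x₀) =O[𝓝 x₀]
      fun x => (x - x₀) ^ 2 :=
    isBigO_of_le' (c := ‖iteratedDeriv 2 f x₀‖) _ fun x => by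
      rw [norm_smul, mul_comm, norm_div, Real.norm_two]
      gcongr
      linarith [norm_nonneg ((x - x₀) ^ 2)]
  refine ((taylor_isLittleO_univ hf).isBigO.add hquad).congr_left fun x => ?_
  rw [heval]
  abel

lemma contDiff_pi_div_four_div_arctan_exp {n : WithTop ℕ∞} :
    ContDiff ℝ n fun u => π / 4 / arctan (exp u) :=
  contDiff_const.div (contDiff_arctan.comp contDiff_exp) fun u => (arctan_pos.2 (exp_pos u)).ne'

lemma hasDerivAt_pi_div_four_div_arctan_exp_zero :
    HasDerivAt (fun u => π / 4 / arctan (exp u)) (-(2 / π)) 0 := by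
  have h : HasDerivAt (fun u => π / 4 / arctan (exp u)) _ 0 :=
    (hasDerivAt_const (0 : ℝ) (π / 4)).div ((hasDerivAt_arctan' _).comp 0 (hasDerivAt_exp 0))
      (by simp [arctan_one, pi_ne_zero])
  convert h using 1
  norm_num [arctan_one]
  field_simp
  ring

lemma pi_div_four_div_arctan_exp_isBigO :
    (fun u => π / 4 / arctan (exp u) - (1 - 2 * u / π)) =O[𝓝 0] fun u => u ^ 2 := by
  refine (contDiff_pi_div_four_div_arctan_exp.isBigO_sub_taylor_one 0).congr (fun u => ?_)
    (fun u => by simp)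
  rw [hasDerivAt_pi_div_four_div_arctan_exp_zero.deriv, exp_zero, arctan_one,
    div_self (by positivity), smul_eq_mul]
  ring

theorem optimal_T_asymptotics_general (ε : ℝ) (hε0 : 0 < ε) :
    (fun n : ℕ => π / 4 / Real.arctan (ε ^ ((1 : ℝ) / (2 * n)))
        - (1 - Real.log ε / (π * n))) =O[atTop]
      (fun n : ℕ => ((n : ℝ) ^ 2)⁻¹) := by
  set u : ℕ → ℝ := fun n => log ε / (2 * n)
  have hu : Tendsto u atTop (𝓝 0) :=
    tendsto_const_nhds.div_atTop (tendsto_natCast_atTop_atTop.const_mul_atTop two_pos)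
  have hsubst (n : ℕ) : π / 4 / arctan (ε ^ ((1 : ℝ) / (2 * n))) - (1 - log ε / (π * n))
      = π / 4 / arctan (exp (u n)) - (1 - 2 * u n / π) := by
    rw [rpow_def_of_pos hε0, mul_one_div]
    ring
  have hsq (n : ℕ) : u n ^ 2 = (log ε ^ 2 / 4) * ((n : ℝ) ^ 2)⁻¹ := by ring
  simp only [hsubst]
  refine (pi_div_four_div_arctan_exp_isBigO.comp_tendsto hu).trans ?_
  exact ((isBigO_refl _ _).const_mul_left (log ε ^ 2 / 4)).congr_left fun n => (hsq n).symm

theorem optimal_T_asymptotics (ε : ℝ) (hε0 : 0 < ε) (hε1 : ε < 1) :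
    (fun n : ℕ => π / 4 / Real.arctan (ε ^ ((1 : ℝ) / (2 * n)))
        - (1 - Real.log ε / (π * n))) =O[atTop]
      (fun n : ℕ => ((n : ℝ) ^ 2)⁻¹) :=
  optimal_T_asymptotics_general ε hε0
end
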